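/- arXiv:1310.2104 — 2 statements merged into one kernel-verified Lean document; each statement's English description precedes it below -/
import Mathlib

section
/- For every nonnegative integer n, CP_n^{(k)}(x;λ,μ) = Σ_{l=0}^{n} C(n,l) · C_{n-l}^{(k)} · S_l(-x;λ,μ), where C_m^{(k)} = C_m^{(k)}(0) are the poly-Cauchy numbers of the first kind. -/
open PowerSeries Finset

noncomputable section

/-- The formal power series log(1+t). -/
def logS : PowerSeries ℝ :=
  PowerSeries.mk fun n => if n = 0 then 0 else (-1) ^ (n + 1) / n

/-- Composition of formal power series (valid when `g` has zero constant term). -/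
def compS (f g : PowerSeries ℝ) : PowerSeries ℝ :=
  PowerSeries.mk fun n =>
    ∑ m ∈ Finset.range (n + 1), (PowerSeries.coeff (R := ℝ) m f) * PowerSeries.coeff (R := ℝ) n (g ^ m)

/-- The formal power series (1+t)^x = Σ (x)_n t^n / n!. -/
def onePow (x : ℝ) : PowerSeries ℝ :=
  PowerSeries.mk fun n => (descPochhammer ℝ n).eval x / n.factorial

/-- The polylogarithm factorial function Lif_k(t) = Σ t^n/(n!(n+1)^k). -/
def Lif (k : ℤ) : PowerSeries ℝ :=
  PowerSeries.mk fun n => 1 / (n.factorial * ((n : ℝ) + 1) ^ k)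

/-- The Peters factor (1+(1+t)^λ)^(-μ) = 2^(-μ) exp(-μ log(1 + ((1+t)^λ - 1)/2)). -/
def peters (lam mu : ℝ) : PowerSeries ℝ :=
  PowerSeries.C (R := ℝ) ((2 : ℝ) ^ (-mu)) *
    compS (PowerSeries.exp ℝ)
      (PowerSeries.C (R := ℝ) (-mu) * compS logS (PowerSeries.C (R := ℝ) (1 / 2) * (onePow lam - 1)))

/-- The Peters polynomials S_n(x;λ,μ). -/
def petersPoly (lam mu x : ℝ) (n : ℕ) : ℝ :=
  n.factorial * PowerSeries.coeff (R := ℝ) n (peters lam mu * onePow x)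

/-- Poly-Cauchy polynomials of the first kind C_n^{(k)}(x). -/
def pC (k : ℤ) (x : ℝ) (n : ℕ) : ℝ :=
  n.factorial * PowerSeries.coeff (R := ℝ) n (compS (Lif k) logS * onePow (-x))

/-- Poly-Cauchy polynomials of the second kind Ĉ_n^{(k)}(x). -/
def pChat (k : ℤ) (x : ℝ) (n : ℕ) : ℝ :=
  n.factorial * PowerSeries.coeff (R := ℝ) n (compS (Lif k) (-logS) * onePow x)

/-- The poly-Cauchy of the first kind and Peters mixed-type polynomials CP_n^{(k)}(x;λ,μ). -/
def CP (k : ℤ) (lam mu x : ℝ) (n : ℕ) : ℝ :=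
  n.factorial * PowerSeries.coeff (R := ℝ) n (peters lam mu * compS (Lif k) logS * onePow (-x))

/-- The poly-Cauchy of the second kind and Peters mixed-type polynomials ĈP_n^{(k)}(x;λ,μ). -/
def CPhat (k : ℤ) (lam mu x : ℝ) (n : ℕ) : ℝ :=
  n.factorial * PowerSeries.coeff (R := ℝ) n (peters lam mu * compS (Lif k) (-logS) * onePow x)

/-- Signed Stirling numbers of the first kind: (x)_n = Σ_l s(n,l) x^l. -/
def stirS (n l : ℕ) : ℝ := (descPochhammer ℝ n).coeff l

theorem PowerSeries.factorial_mul_coeff_mul {R : Type*} [CommSemiring R] (f g : R⟦X⟧) (n : ℕ) :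
    n.factorial * coeff n (f * g) =
      ∑ l ∈ range (n + 1),
        n.choose l * ((n - l).factorial * coeff (n - l) f) * (l.factorial * coeff l g) := by
  rw [coeff_mul, ← Nat.sum_antidiagonal_swap, Nat.sum_antidiagonal_eq_sum_range_succ_mk, mul_sum]
  refine sum_congr rfl fun l hl => ?_
  have hfac : ((n.choose l * l.factorial * (n - l).factorial : ℕ) : R) = n.factorial :=
    congrArg Nat.cast (Nat.choose_mul_factorial_mul_factorial (Nat.lt_succ_iff.mp (mem_range.mp hl)))
  rw [← hfac, Prod.swap_prod_mk]
  push_cast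
  ring

theorem onePow_zero : onePow 0 = 1 := by
  ext m
  rw [onePow, coeff_mk, descPochhammer_eval_zero, coeff_one]
  split_ifs with hm <;> simp [hm]

theorem CP_eq_sum_polyCauchyNum_mul_peters (k : ℤ) (lam mu x : ℝ) (n : ℕ) :
    CP k lam mu x n =
      ∑ l ∈ Finset.range (n + 1),
        (n.choose l : ℝ) * pC k 0 (n - l) * petersPoly lam mu (-x) l := by
  have hcomm : peters lam mu * compS (Lif k) logS * onePow (-x) =
      compS (Lif k) logS * (peters lam mu * onePow (-x)) := by ring
  rw [CP, hcomm, factorial_mul_coeff_mul]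
  simp only [pC, petersPoly, neg_zero, onePow_zero, mul_one]
end
end

section
/- For n ≥ 2 and 1 ≤ m ≤ n−1, the identity m·Σ_{l=0}^{n-m} C(n,l) s(n−l,m) Ĉ P_l^{(k)}(0;λ,μ) = −μλm·Σ_{l=0}^{n-1-m} C(n−1,l) s(n−1−l,m) Ĉ P_l^{(k)}(λ−1;λ,μ+1) + Σ_{l=0}^{n-m} C(n−1,l) s(n−1−l,m−1) Ĉ P_l^{(k−1)}(−1;λ,μ) + (m−1)·Σ_{l=0}^{n-m} C(n−1,l) s(n−1−l,m−1) Ĉ P_l^{(k)}(−1;λ,μ) holds. -/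
open PowerSeries Finset

noncomputable section

/-! Write `G(t) = (1+(1+t)^λ)^{-μ} Lif_k(-log(1+t))`. Since
`log(1+t)^m / m! = Σ_n s(n,m) t^n/n!`, each Stirling convolution in the identity is a coefficient
of `G(t) (1+t)^x log(1+t)^m`, and the identity is the coefficient of `t^(n-1)` in the derivative of
`G(t) log(1+t)^m`. That derivative splits into three terms by
`d/dt (1+(1+t)^λ)^{-μ} = -μλ (1+(1+t)^λ)^{-μ-1} (1+t)^{λ-1}` and
`log(1+t) · d/dt Lif_k(-log(1+t)) = (Lif_{k-1} - Lif_k)(-log(1+t)) / (1+t)`. -/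

theorem PowerSeries.coeff_pow_eq_zero_of_lt {R : Type*} [CommSemiring R] {g : PowerSeries R}
    (hg : constantCoeff g = 0) {j m : ℕ} (h : j < m) : coeff j (g ^ m) = 0 :=
  coeff_of_lt_order _ <| (Nat.cast_lt.2 h).trans_le (le_order_pow_of_constantCoeff_eq_zero m hg)

theorem PowerSeries.derivative_C_mul {R : Type*} [CommSemiring R] (a : R) (f : PowerSeries R) :
    d⁄dX R (C a * f) = C a * d⁄dX R f := by
  rw [← smul_eq_C_mul, Derivation.map_smul, smul_eq_C_mul]

theorem PowerSeries.derivative_exp_subst {A : Type*} [CommRing A] [Algebra ℚ A]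
    {w : PowerSeries A} (hw : HasSubst w) :
    d⁄dX A ((exp A).subst w) = (exp A).subst w * d⁄dX A w := by
  rw [derivative_subst hw, derivative_exp]

theorem PowerSeries.eq_of_derivative_eq_mul {R : Type*} [CommRing R] [IsAddTorsionFree R]
    {a F G : PowerSeries R} (hF : d⁄dX R F = a * F) (hG : d⁄dX R G = a * G)
    (h0 : constantCoeff F = constantCoeff G) : F = G := by
  rw [← sub_eq_zero]
  have hH : d⁄dX R (F - G) = a * (F - G) := by rw [map_sub, hF, hG, mul_sub]
  ext n
  induction n using Nat.strong_induction_on with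
  | _ n ih =>
    cases n with
    | zero => simp [h0]
    | succ n =>
      have h := congrArg (coeff n) hH
      rw [coeff_derivative, coeff_mul, sum_eq_zero fun p hp => by
        rw [ih p.2 (by rw [HasAntidiagonal.mem_antidiagonal] at hp; omega), map_zero, mul_zero],
        ← Nat.cast_succ, ← nsmul_eq_mul', nsmul_eq_zero_iff] at h
      simpa using h

theorem compS_eq_subst (f : PowerSeries ℝ) {g : PowerSeries ℝ} (hg : constantCoeff g = 0) :
    compS f g = f.subst g := by
  ext n
  rw [compS, coeff_mk, coeff_subst' (HasSubst.of_constantCoeff_zero' hg)]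
  refine (finsum_eq_sum_of_support_subset _ fun d hd => ?_).symm
  by_contra h
  simp only [Function.mem_support, coe_range, Set.mem_Iio, not_lt] at hd h
  exact hd (by rw [coeff_pow_eq_zero_of_lt hg (by omega), mul_zero])

theorem constantCoeff_subst_of_constantCoeff_eq_zero (f : PowerSeries ℝ) {g : PowerSeries ℝ}
    (hg : constantCoeff g = 0) : constantCoeff (f.subst g) = constantCoeff f := by
  rw [← compS_eq_subst f hg, ← coeff_zero_eq_constantCoeff_apply, compS, coeff_mk]
  simp

theorem coeff_onePow (x : ℝ) (n : ℕ) :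
    coeff n (onePow x) = (descPochhammer ℝ n).eval x / n.factorial :=
  coeff_mk _ _

theorem onePow_eq_binomialSeries (x : ℝ) : onePow x = PowerSeries.binomialSeries ℝ x := by
  ext n
  rw [coeff_onePow, binomialSeries_coeff, smul_eq_mul, mul_one, Ring.choose_eq_smul, smul_eq_mul,
    ← Polynomial.aeval_eq_smeval, Polynomial.aeval_def, Polynomial.eval₂_eq_eval_map,
    descPochhammer_map, div_eq_inv_mul]

theorem onePow_add (a b : ℝ) : onePow (a + b) = onePow a * onePow b := by
  simp only [onePow_eq_binomialSeries, binomialSeries_add]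

theorem constantCoeff_onePow (x : ℝ) : constantCoeff (onePow x) = 1 := by
  rw [onePow_eq_binomialSeries, binomialSeries_constantCoeff]

theorem derivative_onePow (x : ℝ) : d⁄dX ℝ (onePow x) = C x * onePow (x - 1) := by
  ext n
  rw [coeff_derivative, coeff_C_mul, coeff_onePow, coeff_onePow, descPochhammer_succ_left,
    Polynomial.eval_mul, Polynomial.eval_X, Polynomial.eval_comp, Polynomial.eval_sub,
    Polynomial.eval_X, Polynomial.eval_one, Nat.factorial_succ]
  push_cast
  field_simp

theorem constantCoeff_logS : constantCoeff logS = 0 := by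
  simp [logS, ← coeff_zero_eq_constantCoeff_apply]

theorem derivative_logS : d⁄dX ℝ logS = onePow (-1) := by
  ext n
  have hpoch : (descPochhammer ℝ n).eval (-1) = (-1) ^ n * n.factorial := by
    induction n with
    | zero => simp
    | succ n ih =>
      rw [descPochhammer_succ_right, Polynomial.eval_mul, Polynomial.eval_sub, ih,
        Polynomial.eval_X, Polynomial.eval_natCast, Nat.factorial_succ]
      push_cast
      ring
  rw [coeff_derivative, coeff_onePow, hpoch, logS, coeff_mk, if_neg n.succ_ne_zero]
  push_cast
  field_simp
  ring

/-- Both sides solve `F' = x F / (1 + t)` with `F(0) = 1`. -/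
theorem exp_subst_C_mul_logS (x : ℝ) : (exp ℝ).subst (C x * logS) = onePow x := by
  have hw : constantCoeff (C x * logS) = 0 := by simp [constantCoeff_logS]
  refine eq_of_derivative_eq_mul (a := C x * onePow (-1)) ?_ ?_ ?_
  · rw [derivative_exp_subst (HasSubst.of_constantCoeff_zero' hw), derivative_C_mul,
      derivative_logS, mul_comm]
  · rw [derivative_onePow, sub_eq_neg_add, onePow_add, mul_assoc]
  · rw [constantCoeff_subst_of_constantCoeff_eq_zero _ hw, constantCoeff_exp, constantCoeff_onePow]

theorem coeff_onePow_eq_sum_coeff_logS_pow (x : ℝ) (j : ℕ) :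
    coeff j (onePow x) = ∑ i ∈ range (j + 1), coeff j (logS ^ i) / i.factorial * x ^ i := by
  have hw : constantCoeff (C x * logS) = 0 := by simp [constantCoeff_logS]
  rw [← exp_subst_C_mul_logS, ← compS_eq_subst _ hw, compS, coeff_mk]
  refine sum_congr rfl fun i _ => ?_
  rw [coeff_exp, mul_pow, ← map_pow, coeff_C_mul]
  simp only [one_div, eq_ratCast, Rat.cast_inv, Rat.cast_natCast]
  ring

/-- Compare the coefficients of `x ^ m` in `(1 + t) ^ x = Σ_m x ^ m log(1 + t) ^ m / m!`. -/
theorem coeff_logS_pow (j m : ℕ) :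
    coeff j (logS ^ m) = m.factorial * stirS j m / j.factorial := by
  rcases lt_or_ge j m with hjm | hmj
  · rw [coeff_pow_eq_zero_of_lt constantCoeff_logS hjm, stirS,
      Polynomial.coeff_eq_zero_of_natDegree_lt (by rwa [descPochhammer_natDegree]), mul_zero,
      zero_div]
  have hpoly : ∑ i ∈ range (j + 1), Polynomial.monomial i (coeff j (logS ^ i) / i.factorial)
      = Polynomial.C (1 / j.factorial : ℝ) * descPochhammer ℝ j := by
    refine Polynomial.funext fun x => ?_
    simp only [Polynomial.eval_finsetSum, Polynomial.eval_monomial, Polynomial.eval_mul,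
      Polynomial.eval_C, ← coeff_onePow_eq_sum_coeff_logS_pow, coeff_onePow]
    ring
  have hcoeff := congrArg (Polynomial.coeff · m) hpoly
  simp only [Polynomial.finsetSum_coeff, Polynomial.coeff_monomial, sum_ite_eq', mem_range,
    Polynomial.coeff_C_mul, if_pos (Nat.lt_succ_of_le hmj)] at hcoeff
  rw [stirS]
  field_simp at hcoeff ⊢
  linarith

theorem constantCoeff_C_mul_onePow_sub_one (a x : ℝ) :
    constantCoeff (C a * (onePow x - 1)) = 0 := by
  rw [map_mul, map_sub, constantCoeff_onePow, map_one, sub_self, mul_zero]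

theorem peters_eq_subst (lam mu : ℝ) :
    peters lam mu =
      C ((2 : ℝ) ^ (-mu)) * (onePow (-mu)).subst (C (1 / 2 : ℝ) * (onePow lam - 1)) := by
  have hv := constantCoeff_C_mul_onePow_sub_one (1 / 2) lam
  have hv' := HasSubst.of_constantCoeff_zero' hv
  have hw : constantCoeff (C (-mu) * logS.subst (C (1 / 2 : ℝ) * (onePow lam - 1))) = 0 := by
    rw [map_mul, constantCoeff_subst_of_constantCoeff_eq_zero _ hv, constantCoeff_logS, mul_zero]
  rw [peters, compS_eq_subst _ hv, compS_eq_subst _ hw, ← exp_subst_C_mul_logS (-mu),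
    subst_comp_subst_apply (HasSubst.of_constantCoeff_zero' (by simp [constantCoeff_logS])) hv',
    subst_mul hv', subst_C]
  rfl

theorem derivative_peters (lam mu : ℝ) :
    d⁄dX ℝ (peters lam mu) = C (-(mu * lam)) * peters lam (mu + 1) * onePow (lam - 1) := by
  have hv := HasSubst.of_constantCoeff_zero' (constantCoeff_C_mul_onePow_sub_one (1 / 2) lam)
  rw [peters_eq_subst, peters_eq_subst, derivative_C_mul, derivative_subst hv,
    derivative_onePow (-mu), ← smul_eq_C_mul (onePow (-mu - 1)), subst_smul hv, smul_eq_C_mul,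
    derivative_C_mul, map_sub, derivative_onePow, Derivation.map_one_eq_zero, sub_zero,
    show -mu - 1 = -(mu + 1) by ring]
  set S := (onePow (-(mu + 1))).subst (C (1 / 2 : ℝ) * (onePow lam - 1))
  calc _ = C ((2 : ℝ) ^ (-mu) * (1 / 2) * (-mu) * lam) * (S * onePow (lam - 1)) := by
        simp only [map_mul]; ring
    _ = _ := by
        rw [show (2 : ℝ) ^ (-mu) * (1 / 2) = 2 ^ (-(mu + 1)) by
          rw [neg_add, Real.rpow_add two_pos, Real.rpow_neg_one]; ring]
        simp only [map_mul, map_neg]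
        ring

theorem derivative_X_mul_Lif (k : ℤ) : d⁄dX ℝ (X * Lif k) = Lif (k - 1) := by
  ext n
  have hn : ((n : ℝ) + 1) ≠ 0 := by positivity
  rw [coeff_derivative, coeff_succ_X_mul, Lif, Lif, coeff_mk, coeff_mk,
    ← sub_add_cancel k 1, zpow_add_one₀ hn, add_sub_cancel_right]
  field_simp

theorem logS_mul_derivative_Lif_subst (k : ℤ) :
    logS * d⁄dX ℝ ((Lif k).subst (-logS)) =
      ((Lif (k - 1)).subst (-logS) - (Lif k).subst (-logS)) * onePow (-1) := by
  have hs : HasSubst (-logS) := HasSubst.of_constantCoeff_zero' (by simp [constantCoeff_logS])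
  have h := derivative_subst (f := X * Lif k) hs
  rw [derivative_X_mul_Lif, subst_mul hs, subst_X hs, Derivation.leibniz, map_neg,
    derivative_logS, smul_eq_mul, smul_eq_mul] at h
  linear_combination -h

def CPhatGF (k : ℤ) (lam mu : ℝ) : PowerSeries ℝ := peters lam mu * (Lif k).subst (-logS)

theorem CPhat_eq_coeff (k : ℤ) (lam mu x : ℝ) (n : ℕ) :
    CPhat k lam mu x n = n.factorial * coeff n (CPhatGF k lam mu * onePow x) := by
  rw [CPhat, CPhatGF, compS_eq_subst _ (by simp [constantCoeff_logS])]

theorem derivative_CPhatGF_mul_logS_pow_succ (k : ℤ) (lam mu : ℝ) (m : ℕ) :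
    d⁄dX ℝ (CPhatGF k lam mu * logS ^ (m + 1)) =
      C (-(mu * lam)) * (CPhatGF k lam (mu + 1) * onePow (lam - 1) * logS ^ (m + 1))
        + CPhatGF (k - 1) lam mu * onePow (-1) * logS ^ m
        + C (m : ℝ) * (CPhatGF k lam mu * onePow (-1) * logS ^ m) := by
  simp only [CPhatGF, Derivation.leibniz, Derivation.leibniz_pow, derivative_peters,
    derivative_logS, smul_eq_mul, nsmul_eq_mul, Nat.add_sub_cancel, map_natCast]
  push_cast
  linear_combination (peters lam mu * logS ^ m) * logS_mul_derivative_Lif_subst k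

theorem sum_choose_mul_stirS_mul_coeff (F : PowerSeries ℝ) {n m : ℕ} (hm : m ≤ n) :
    ∑ l ∈ range (n - m + 1), (n.choose l : ℝ) * stirS (n - l) m * (l.factorial * coeff l F)
      = n.factorial / m.factorial * coeff n (F * logS ^ m) := by
  rw [coeff_mul, Nat.sum_antidiagonal_eq_sum_range_succ (fun a b => coeff a F * coeff b (logS ^ m)),
    mul_sum, ← sum_subset (range_subset_range.2 (by omega : n - m + 1 ≤ n + 1))]
  · refine sum_congr rfl fun l hl => ?_
    have hln : l ≤ n := by rw [mem_range] at hl; omega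
    rw [coeff_logS_pow, Nat.cast_choose ℝ hln]
    field_simp
  · intro l hln hl
    rw [mem_range] at hln hl
    rw [coeff_pow_eq_zero_of_lt constantCoeff_logS (by omega), mul_zero, mul_zero]

theorem CPhat_stirling_identity_general (k : ℤ) (lam mu : ℝ) (n m : ℕ)
    (hm1 : 1 ≤ m) (hm : m ≤ n - 1) :
    (m : ℝ) * ∑ l ∈ Finset.range (n - m + 1),
        (n.choose l : ℝ) * stirS (n - l) m * CPhat k lam mu 0 l
      = -(mu * lam * m) *
          ∑ l ∈ Finset.range (n - 1 - m + 1),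
            ((n - 1).choose l : ℝ) * stirS (n - 1 - l) m * CPhat k lam (mu + 1) (lam - 1) l
        + (∑ l ∈ Finset.range (n - m + 1),
            ((n - 1).choose l : ℝ) * stirS (n - 1 - l) (m - 1) * CPhat (k - 1) lam mu (-1) l)
        + ((m : ℝ) - 1) *
            ∑ l ∈ Finset.range (n - m + 1),
              ((n - 1).choose l : ℝ) * stirS (n - 1 - l) (m - 1) * CPhat k lam mu (-1) l := by
  obtain ⟨m, rfl⟩ : ∃ m', m = m' + 1 := ⟨m - 1, by omega⟩
  obtain ⟨n, rfl⟩ : ∃ n', n = n' + 1 := ⟨n - 1, by omega⟩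
  simp only [Nat.add_sub_cancel, Nat.add_sub_add_right] at hm ⊢
  simp only [CPhat_eq_coeff, onePow_zero, mul_one]
  have hA := sum_choose_mul_stirS_mul_coeff (CPhatGF k lam mu) (show m + 1 ≤ n + 1 by omega)
  have hB := sum_choose_mul_stirS_mul_coeff (CPhatGF k lam (mu + 1) * onePow (lam - 1)) hm
  have hC := sum_choose_mul_stirS_mul_coeff (CPhatGF (k - 1) lam mu * onePow (-1))
    (show m ≤ n by omega)
  have hD := sum_choose_mul_stirS_mul_coeff (CPhatGF k lam mu * onePow (-1)) (show m ≤ n by omega)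
  rw [Nat.add_sub_add_right] at hA
  rw [hA, hB, hC, hD]
  have hderiv := congrArg (coeff n) (derivative_CPhatGF_mul_logS_pow_succ k lam mu m)
  simp only [coeff_derivative, map_add, coeff_C_mul] at hderiv
  rw [Nat.factorial_succ n, Nat.factorial_succ m]
  push_cast at hderiv ⊢
  field_simp
  linear_combination hderiv

theorem CPhat_stirling_identity (k : ℤ) (lam mu : ℝ) (n m : ℕ)
    (hn : 2 ≤ n) (hm1 : 1 ≤ m) (hm : m ≤ n - 1) :
    (m : ℝ) * ∑ l ∈ Finset.range (n - m + 1),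
        (n.choose l : ℝ) * stirS (n - l) m * CPhat k lam mu 0 l
      = -(mu * lam * m) *
          ∑ l ∈ Finset.range (n - 1 - m + 1),
            ((n - 1).choose l : ℝ) * stirS (n - 1 - l) m * CPhat k lam (mu + 1) (lam - 1) l
        + (∑ l ∈ Finset.range (n - m + 1),
            ((n - 1).choose l : ℝ) * stirS (n - 1 - l) (m - 1) * CPhat (k - 1) lam mu (-1) l)
        + ((m : ℝ) - 1) *
            ∑ l ∈ Finset.range (n - m + 1),
              ((n - 1).choose l : ℝ) * stirS (n - 1 - l) (m - 1) * CPhat k lam mu (-1) l :=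
  CPhat_stirling_identity_general k lam mu n m hm1 hm
end
end
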